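/- arXiv:1805.05585 — 3 statements merged into one kernel-verified Lean document; each statement's English description precedes it below -/
import Mathlib

section
/- For the ELLAM scheme applied to the advection–reaction equation, if there exists z₁ in the discrete space with Π_C z₁ = 1 on Ω, then the solution c⁽ⁿ⁺¹⁾ of the ELLAM time step satisfies the exact discrete mass balance: ∫_Ω φ Π_C c⁽ⁿ⁺¹⁾ dx = ∫_Ω φ Π_C c⁽ⁿ⁾ dx + δt (w ∫_Ω f_n dx + (1−w) ∫_Ω f_{n+1} dx). -/
open MeasureTheory

/-- Exact discrete mass balance of the ELLAM scheme: if the discrete space contains a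
vector `z₁` with `Π_C z₁ = 1` on `Ω`, then the ELLAM time step conserves mass. -/
theorem ellam_discrete_mass_balance {d : ℕ}
    (Ω : Set (EuclideanSpace ℝ (Fin d))) (hΩ : MeasurableSet Ω)
    (X : Type*) [AddCommGroup X] [Module ℝ X] [FiniteDimensional ℝ X]
    (P : X →ₗ[ℝ] (EuclideanSpace ℝ (Fin d) → ℝ))  -- the reconstruction Π_C
    (φ fn fn1 : EuclideanSpace ℝ (Fin d) → ℝ)
    (F : EuclideanSpace ℝ (Fin d) → EuclideanSpace ℝ (Fin d))  -- the flow F_{δt}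
    (w δ : ℝ) (hw : w ∈ Set.Icc (0:ℝ) 1) (hδ : 0 < δ)
    (c c' : X)
    -- the ELLAM time step, with v_z(·,tⁿ) = Π_C z ∘ F_{δt}
    (hscheme : ∀ z : X,
      (∫ x in Ω, φ x * P c' x * P z x) - (∫ x in Ω, φ x * P c x * P z (F x))
        = w * δ * (∫ x in Ω, fn x * P z (F x))
          + (1 - w) * δ * (∫ x in Ω, fn1 x * P z x))
    (z₁ : X) (hz₁ : ∀ x, P z₁ x = 1) :
    (∫ x in Ω, φ x * P c' x)
      = (∫ x in Ω, φ x * P c x)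
        + δ * (w * (∫ x in Ω, fn x) + (1 - w) * (∫ x in Ω, fn1 x)) := by
  have h := hscheme z₁
  simp only [hz₁, mul_one] at h
  linarith
end

section
/- Suppose Π_C is a piecewise-constant reconstruction on a finite mesh M of Ω (i.e. Π_C c = Σ_{M∈M} c_M 1_M) and for each cell K there is z_K with Π_C z_K = 1_K. Then the ELLAM step with test function z_K is equivalent to |K|_φ c_K⁽ⁿ⁺¹⁾ = Σ_{M∈M} |M ∩ F_{−δt}(K)|_φ c_M⁽ⁿ⁾ + δt ∫_Ω f⁽ⁿ,ʷ⁾·(1_K)_F dx, where |E|_φ = ∫_E φ dx. -/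
open MeasureTheory

private lemma mul_indicator_one {α : Type*} (s : Set α) (g : α → ℝ) (x : α) :
    g x * Set.indicator s (fun _ => (1:ℝ)) x = Set.indicator s g x := by
  by_cases h : x ∈ s <;> simp [h]

/-- Physical interpretation of ELLAM for piecewise-constant reconstructions: the ELLAM
step with test function `1_K` is equivalent to the cell-update
`|K|_φ c_K⁽ⁿ⁺¹⁾ = Σ_M |M ∩ F_{−δt}(K)|_φ c_M⁽ⁿ⁾ + δt ∫_Ω f⁽ⁿ,ʷ⁾·(1_K)_F`. -/
theorem ellam_piecewise_constant_interpretation {d : ℕ}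
    (Ω : Set (EuclideanSpace ℝ (Fin d))) (hΩ : MeasurableSet Ω)
    (ι : Type*) [Fintype ι] (cell : ι → Set (EuclideanSpace ℝ (Fin d)))
    (hcellm : ∀ i, MeasurableSet (cell i))
    (hsub : ∀ i, cell i ⊆ Ω)
    (hdisj : Pairwise (Function.onFun Disjoint cell))
    (hcover : (⋃ i, cell i) = Ω)
    (φ fn fn1 : EuclideanSpace ℝ (Fin d) → ℝ)
    (hφint : Integrable φ (volume.restrict Ω))
    (hfnint : Integrable fn (volume.restrict Ω))
    (hfn1int : Integrable fn1 (volume.restrict Ω))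
    (F : EuclideanSpace ℝ (Fin d) → EuclideanSpace ℝ (Fin d)) (hFm : Measurable F)
    (w δ : ℝ) (hw : w ∈ Set.Icc (0:ℝ) 1) (hδ : 0 < δ)
    (c c' : ι → ℝ) (K : ι) :
    ((∫ x in Ω, φ x * (∑ M, c' M * Set.indicator (cell M) (fun _ => (1:ℝ)) x)
          * Set.indicator (cell K) (fun _ => (1:ℝ)) x)
      - (∫ x in Ω, φ x * (∑ M, c M * Set.indicator (cell M) (fun _ => (1:ℝ)) x)
          * Set.indicator (cell K) (fun _ => (1:ℝ)) (F x))
      = w * δ * (∫ x in Ω, fn x * Set.indicator (cell K) (fun _ => (1:ℝ)) (F x))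
        + (1 - w) * δ * (∫ x in Ω, fn1 x * Set.indicator (cell K) (fun _ => (1:ℝ)) x))
    ↔
    ((∫ x in cell K, φ x) * c' K
      = (∑ M, (∫ x in cell M ∩ F ⁻¹' (cell K), φ x) * c M)
        + δ * (∫ x in Ω,
            (w * fn x * Set.indicator (cell K) (fun _ => (1:ℝ)) (F x)
              + (1 - w) * fn1 x * Set.indicator (cell K) (fun _ => (1:ℝ)) x))) := by
  classical
  -- First integral equals |K|_φ * c' K
  have hA : (∫ x in Ω, φ x * (∑ M, c' M * Set.indicator (cell M) (fun _ => (1:ℝ)) x)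
          * Set.indicator (cell K) (fun _ => (1:ℝ)) x)
      = (∫ x in cell K, φ x) * c' K := by
    have hpt : ∀ x, φ x * (∑ M, c' M * Set.indicator (cell M) (fun _ => (1:ℝ)) x)
          * Set.indicator (cell K) (fun _ => (1:ℝ)) x
        = Set.indicator (cell K) φ x * c' K := by
      intro x
      by_cases hx : x ∈ cell K
      · have hsum : (∑ M, c' M * Set.indicator (cell M) (fun _ => (1:ℝ)) x) = c' K := by
          rw [Finset.sum_eq_single K]
          · simp [hx]
          · intro M _ hMK
            have : x ∉ cell M := fun hxM => Set.disjoint_left.1 (hdisj hMK) hxM hx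
            simp [this]
          · simp
        simp [hx, hsum, mul_comm]
      · simp [hx]
    rw [MeasureTheory.setIntegral_congr_fun hΩ (fun x _ => hpt x)]
    rw [integral_mul_const, MeasureTheory.setIntegral_indicator (hcellm K),
      Set.inter_eq_self_of_subset_right (hsub K)]
  -- Second integral equals Σ_M |M ∩ F⁻¹(K)|_φ * c M
  have hB : (∫ x in Ω, φ x * (∑ M, c M * Set.indicator (cell M) (fun _ => (1:ℝ)) x)
          * Set.indicator (cell K) (fun _ => (1:ℝ)) (F x))
      = ∑ M, (∫ x in cell M ∩ F ⁻¹' (cell K), φ x) * c M := by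
    have hpt : ∀ x, φ x * (∑ M, c M * Set.indicator (cell M) (fun _ => (1:ℝ)) x)
          * Set.indicator (cell K) (fun _ => (1:ℝ)) (F x)
        = ∑ M, Set.indicator (cell M ∩ F ⁻¹' (cell K)) φ x * c M := by
      intro x
      rw [Finset.mul_sum, Finset.sum_mul]
      refine Finset.sum_congr rfl (fun M _ => ?_)
      by_cases h1 : x ∈ cell M <;> by_cases h2 : F x ∈ cell K
      · have : x ∈ cell M ∩ F ⁻¹' (cell K) := ⟨h1, h2⟩
        simp [h1, h2, this]
      · have : x ∉ cell M ∩ F ⁻¹' (cell K) := fun h => h2 h.2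
        simp [h2, this]
      · have : x ∉ cell M ∩ F ⁻¹' (cell K) := fun h => h1 h.1
        simp [h1, this]
      · have : x ∉ cell M ∩ F ⁻¹' (cell K) := fun h => h1 h.1
        simp [h1, this]
    rw [MeasureTheory.setIntegral_congr_fun hΩ (fun x _ => hpt x)]
    rw [MeasureTheory.integral_finset_sum]
    · refine Finset.sum_congr rfl (fun M _ => ?_)
      rw [integral_mul_const,
        MeasureTheory.setIntegral_indicator ((hcellm M).inter (hFm (hcellm K))),
        Set.inter_eq_self_of_subset_right
          (fun x hx => hsub M hx.1)]
    · intro M _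
      exact (hφint.indicator ((hcellm M).inter (hFm (hcellm K)))).mul_const _
  -- source term
  have hfn' : ∀ x, fn x * Set.indicator (cell K) (fun _ => (1:ℝ)) (F x)
      = Set.indicator (F ⁻¹' (cell K)) fn x := by
    intro x; by_cases h : F x ∈ cell K <;> simp [h, Set.mem_preimage]
  have hfn1' : ∀ x, fn1 x * Set.indicator (cell K) (fun _ => (1:ℝ)) x
      = Set.indicator (cell K) fn1 x := by
    intro x; exact mul_indicator_one _ _ _
  have hI1 : Integrable (Set.indicator (F ⁻¹' (cell K)) fn) (volume.restrict Ω) :=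
    hfnint.indicator (hFm (hcellm K))
  have hI2 : Integrable (Set.indicator (cell K) fn1) (volume.restrict Ω) :=
    hfn1int.indicator (hcellm K)
  have hC : δ * (∫ x in Ω,
            (w * fn x * Set.indicator (cell K) (fun _ => (1:ℝ)) (F x)
              + (1 - w) * fn1 x * Set.indicator (cell K) (fun _ => (1:ℝ)) x))
      = w * δ * (∫ x in Ω, fn x * Set.indicator (cell K) (fun _ => (1:ℝ)) (F x))
        + (1 - w) * δ * (∫ x in Ω, fn1 x * Set.indicator (cell K) (fun _ => (1:ℝ)) x) := by
    have hpt : ∀ x, w * fn x * Set.indicator (cell K) (fun _ => (1:ℝ)) (F x)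
              + (1 - w) * fn1 x * Set.indicator (cell K) (fun _ => (1:ℝ)) x
        = w * Set.indicator (F ⁻¹' (cell K)) fn x
          + (1 - w) * Set.indicator (cell K) fn1 x := by
      intro x
      rw [mul_assoc, mul_assoc, hfn' x, hfn1' x]
    rw [MeasureTheory.setIntegral_congr_fun hΩ (fun x _ => hpt x),
      MeasureTheory.integral_add (hI1.const_mul w) (hI2.const_mul (1 - w)),
      integral_const_mul, integral_const_mul]
    have e1 : (∫ x in Ω, fn x * Set.indicator (cell K) (fun _ => (1:ℝ)) (F x))
        = ∫ x in Ω, Set.indicator (F ⁻¹' (cell K)) fn x :=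
      MeasureTheory.setIntegral_congr_fun hΩ (fun x _ => hfn' x)
    have e2 : (∫ x in Ω, fn1 x * Set.indicator (cell K) (fun _ => (1:ℝ)) x)
        = ∫ x in Ω, Set.indicator (cell K) fn1 x :=
      MeasureTheory.setIntegral_congr_fun hΩ (fun x _ => hfn1' x)
    rw [e1, e2]; ring
  rw [hA, hB, ← hC, sub_eq_iff_eq_add]
  constructor <;> intro h <;> rw [h] <;> ring
end

section
/- For piecewise-constant reconstructions on a mesh M, the MMOC step with test function 1_K is equivalent to |K|_φ c_K⁽ⁿ⁺¹⁾ = Σ_{M∈M} |F_δt(M) ∩ K|_φ c_M⁽ⁿ⁾ + δt ∫_K f⁽ⁿ,ʷ⁾·e dx − δt ∫_K (c_K)⁽ⁿ,ʷ⁾·e · div u dx, where e = (1,1), (c_K)⁽ⁿ,ʷ⁾ = (w c_K⁽ⁿ⁾, (1−w) c_K⁽ⁿ⁺¹⁾). -/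
open MeasureTheory

/-- Physical interpretation of MMOC for piecewise-constant reconstructions: the MMOC
step with test function `1_K` is equivalent to the cell-update
`|K|_φ c_K⁽ⁿ⁺¹⁾ = Σ_M |F_δt(M) ∩ K|_φ c_M⁽ⁿ⁾ + δt ∫_K f⁽ⁿ,ʷ⁾·e − δt ∫_K (c_K)⁽ⁿ,ʷ⁾·e div u`. -/
theorem mmoc_piecewise_constant_interpretation {d : ℕ}
    (Ω : Set (EuclideanSpace ℝ (Fin d))) (hΩ : MeasurableSet Ω)
    (ι : Type*) [Fintype ι] (cell : ι → Set (EuclideanSpace ℝ (Fin d)))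
    (hcellm : ∀ i, MeasurableSet (cell i))
    (hsub : ∀ i, cell i ⊆ Ω)
    (hdisj : Pairwise (Function.onFun Disjoint cell))
    (hcover : (⋃ i, cell i) = Ω)
    (φ fn fn1 du : EuclideanSpace ℝ (Fin d) → ℝ)
    (hφint : Integrable φ (volume.restrict Ω))
    (hfnint : Integrable fn (volume.restrict Ω))
    (hfn1int : Integrable fn1 (volume.restrict Ω))
    (hduint : Integrable du (volume.restrict Ω))
    -- the forward flow `F_δt` and the backward flow `F_{−δt}`, inverse to each other
    (Ff Fb : EuclideanSpace ℝ (Fin d) → EuclideanSpace ℝ (Fin d))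
    (hFfm : Measurable Ff) (hFbm : Measurable Fb)
    (hinv : ∀ x, Ff (Fb x) = x ∧ Fb (Ff x) = x)
    (w δ : ℝ) (hw : w ∈ Set.Icc (0:ℝ) 1) (hδ : 0 < δ)
    (c c' : ι → ℝ) (K : ι) :
    ((∫ x in Ω, φ x * (∑ M, c' M * Set.indicator (cell M) (fun _ => (1:ℝ)) x)
          * Set.indicator (cell K) (fun _ => (1:ℝ)) x)
      - (∫ x in Ω, φ x * (∑ M, c M * Set.indicator (cell M) (fun _ => (1:ℝ)) (Fb x))
          * Set.indicator (cell K) (fun _ => (1:ℝ)) x)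
      = δ * (∫ x in Ω,
          ((w * fn x + (1 - w) * fn1 x)
            - (w * (∑ M, c M * Set.indicator (cell M) (fun _ => (1:ℝ)) x)
                + (1 - w) * (∑ M, c' M * Set.indicator (cell M) (fun _ => (1:ℝ)) x))
              * du x)
          * Set.indicator (cell K) (fun _ => (1:ℝ)) x))
    ↔
    ((∫ x in cell K, φ x) * c' K
      = (∑ M, (∫ x in (Ff '' cell M) ∩ cell K, φ x) * c M)
        + δ * (∫ x in cell K, (w * fn x + (1 - w) * fn1 x))
        - δ * (∫ x in cell K, (w * c K + (1 - w) * c' K) * du x)) := by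
  -- sum collapses on cell K
  have hsum : ∀ (a : ι → ℝ) x, x ∈ cell K →
      (∑ M, a M * Set.indicator (cell M) (fun _ => (1:ℝ)) x) = a K := by
    intro a x hx
    rw [Finset.sum_eq_single K]
    · simp [Set.indicator_of_mem hx]
    · intro M _ hMK
      have hxM : x ∉ cell M := fun hxM => Set.disjoint_left.mp (hdisj hMK) hxM hx
      simp [Set.indicator_of_notMem hxM]
    · simp
  have hKΩ : Ω ∩ cell K = cell K := Set.inter_eq_right.mpr (hsub K)
  have himg : ∀ M, Ff '' cell M = Fb ⁻¹' cell M := by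
    intro M; ext x
    constructor
    · rintro ⟨m, hm, rfl⟩; simpa [(hinv m).2] using hm
    · intro hx; exact ⟨Fb x, hx, (hinv x).1⟩
  -- Equality 1
  have h1 : (∫ x in Ω, φ x * (∑ M, c' M * Set.indicator (cell M) (fun _ => (1:ℝ)) x)
          * Set.indicator (cell K) (fun _ => (1:ℝ)) x)
      = (∫ x in cell K, φ x) * c' K := by
    have hcong : Set.EqOn
        (fun x => φ x * (∑ M, c' M * Set.indicator (cell M) (fun _ => (1:ℝ)) x)
          * Set.indicator (cell K) (fun _ => (1:ℝ)) x)
        (fun x => c' K * Set.indicator (cell K) φ x) Ω := by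
      intro x _
      dsimp only
      by_cases hx : x ∈ cell K
      · rw [hsum c' x hx, Set.indicator_of_mem hx, Set.indicator_of_mem hx]; ring
      · simp [Set.indicator_of_notMem hx]
    rw [setIntegral_congr_fun hΩ hcong, integral_const_mul,
      setIntegral_indicator (hcellm K), hKΩ]
    ring
  -- Equality 2
  have h2 : (∫ x in Ω, φ x * (∑ M, c M * Set.indicator (cell M) (fun _ => (1:ℝ)) (Fb x))
          * Set.indicator (cell K) (fun _ => (1:ℝ)) x)
      = (∑ M, (∫ x in (Ff '' cell M) ∩ cell K, φ x) * c M) := by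
    have hcong : Set.EqOn
        (fun x => φ x * (∑ M, c M * Set.indicator (cell M) (fun _ => (1:ℝ)) (Fb x))
          * Set.indicator (cell K) (fun _ => (1:ℝ)) x)
        (fun x => ∑ M, c M * Set.indicator ((Fb ⁻¹' cell M) ∩ cell K) φ x) Ω := by
      intro x _
      simp only [Finset.mul_sum, Finset.sum_mul]
      apply Finset.sum_congr rfl
      intro M _
      by_cases hb : Fb x ∈ cell M <;> by_cases hk : x ∈ cell K <;>
        simp [Set.indicator_apply, hb, hk] <;> ring
    rw [setIntegral_congr_fun hΩ hcong, integral_finset_sum]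
    · apply Finset.sum_congr rfl
      intro M _
      rw [integral_const_mul, setIntegral_indicator ((hFbm (hcellm M)).inter (hcellm K)),
        Set.inter_eq_right.mpr ((Set.inter_subset_right).trans (hsub K)), himg M]
      ring
    · intro M _
      exact (hφint.indicator ((hFbm (hcellm M)).inter (hcellm K))).const_mul _
  -- Equality 3
  have hInt1 : Integrable (fun x => w * fn x + (1 - w) * fn1 x) (volume.restrict (cell K)) :=
    ((hfnint.const_mul w).add (hfn1int.const_mul (1 - w))).mono_measure
      (Measure.restrict_mono (hsub K) le_rfl)
  have hInt2 : Integrable (fun x => (w * c K + (1 - w) * c' K) * du x)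
      (volume.restrict (cell K)) :=
    (hduint.const_mul _).mono_measure (Measure.restrict_mono (hsub K) le_rfl)
  have h3 : (∫ x in Ω,
          ((w * fn x + (1 - w) * fn1 x)
            - (w * (∑ M, c M * Set.indicator (cell M) (fun _ => (1:ℝ)) x)
                + (1 - w) * (∑ M, c' M * Set.indicator (cell M) (fun _ => (1:ℝ)) x))
              * du x)
          * Set.indicator (cell K) (fun _ => (1:ℝ)) x)
      = (∫ x in cell K, (w * fn x + (1 - w) * fn1 x))
        - (∫ x in cell K, (w * c K + (1 - w) * c' K) * du x) := by
    have hcong : Set.EqOn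
        (fun x => ((w * fn x + (1 - w) * fn1 x)
            - (w * (∑ M, c M * Set.indicator (cell M) (fun _ => (1:ℝ)) x)
                + (1 - w) * (∑ M, c' M * Set.indicator (cell M) (fun _ => (1:ℝ)) x))
              * du x)
          * Set.indicator (cell K) (fun _ => (1:ℝ)) x)
        (fun x => Set.indicator (cell K)
          (fun x => (w * fn x + (1 - w) * fn1 x)
            - (w * c K + (1 - w) * c' K) * du x) x) Ω := by
      intro x _
      dsimp only
      by_cases hx : x ∈ cell K
      · rw [hsum c x hx, hsum c' x hx, Set.indicator_of_mem hx, Set.indicator_of_mem hx]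
        ring
      · simp [Set.indicator_of_notMem hx]
    rw [setIntegral_congr_fun hΩ hcong, setIntegral_indicator (hcellm K), hKΩ,
      integral_sub hInt1 hInt2]
  rw [h1, h2, h3]
  constructor <;> intro h <;> linarith
end
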